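/- arXiv:2005.02349 — 2 statements merged into one kernel-verified Lean document; each statement's English description precedes it below -/
import Mathlib

section
/- Let X and Y be independent real-valued random variables defined on the same probability space, and let ξ > 0. If E[|X+Y|^ξ] < ∞, then E[|X|^ξ] < ∞ and E[|Y|^ξ] < ∞. -/
open MeasureTheory ProbabilityTheory

lemma abs_rpow_shift_le (a b ξ : ℝ) (hξ : 0 < ξ) :
    |a| ^ ξ ≤ 2 ^ ξ * (|a + b| ^ ξ + |b| ^ ξ) := by
  have h1 : |a| ≤ |a + b| + |b| := by
    calc |a| = |(a + b) + (-b)| := by ring_nf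
    _ ≤ |a + b| + |(-b)| := abs_add_le _ _
    _ = |a + b| + |b| := by rw [abs_neg]
  have h2 : |a + b| + |b| ≤ 2 * max |a + b| |b| := by
    rw [two_mul]
    exact add_le_add (le_max_left _ _) (le_max_right _ _)
  have h3 : |a| ^ ξ ≤ (2 * max |a + b| |b|) ^ ξ :=
    Real.rpow_le_rpow (abs_nonneg a) (h1.trans h2) hξ.le
  have hmax : (0:ℝ) ≤ max |a + b| |b| := le_trans (abs_nonneg b) (le_max_right _ _)
  rw [Real.mul_rpow (by norm_num) hmax] at h3
  refine h3.trans (mul_le_mul_of_nonneg_left ?_ (Real.rpow_nonneg (by norm_num) ξ))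
  rcases le_total |a + b| |b| with h | h
  · rw [max_eq_right h]
    exact le_add_of_nonneg_left (Real.rpow_nonneg (abs_nonneg _) ξ)
  · rw [max_eq_left h]
    exact le_add_of_nonneg_right (Real.rpow_nonneg (abs_nonneg _) ξ)

lemma aux_moment {Ω : Type*} [MeasurableSpace Ω] (P : Measure Ω)
    [IsProbabilityMeasure P] (X Y : Ω → ℝ) (hX : Measurable X) (hY : Measurable Y)
    (hindep : IndepFun X Y P) (ξ : ℝ) (hξ : 0 < ξ)
    (hsum : ∫⁻ ω, ENNReal.ofReal (|X ω + Y ω| ^ ξ) ∂P < ⊤) :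
    ∫⁻ ω, ENNReal.ofReal (|X ω| ^ ξ) ∂P < ⊤ := by
  set μ := P.map X with hμ
  set ν := P.map Y with hν
  haveI : IsProbabilityMeasure μ := Measure.isProbabilityMeasure_map hX.aemeasurable
  haveI : IsProbabilityMeasure ν := Measure.isProbabilityMeasure_map hY.aemeasurable
  have hmap : P.map (fun ω => (X ω, Y ω)) = μ.prod ν :=
    (indepFun_iff_map_prod_eq_prod_map_map hX.aemeasurable hY.aemeasurable).mp hindep
  have hfm : Measurable fun p : ℝ × ℝ => ENNReal.ofReal (|p.1 + p.2| ^ ξ) := by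
    fun_prop
  have hprod : ∫⁻ p, ENNReal.ofReal (|p.1 + p.2| ^ ξ) ∂(μ.prod ν)
      = ∫⁻ ω, ENNReal.ofReal (|X ω + Y ω| ^ ξ) ∂P := by
    rw [← hmap, lintegral_map hfm (hX.prodMk hY)]
  have hfub : ∫⁻ y, ∫⁻ x, ENNReal.ofReal (|x + y| ^ ξ) ∂μ ∂ν < ⊤ := by
    rw [← lintegral_prod_symm _ hfm.aemeasurable, hprod]
    exact hsum
  have hae : ∀ᵐ y ∂ν, ∫⁻ x, ENNReal.ofReal (|x + y| ^ ξ) ∂μ < ⊤ :=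
    ae_lt_top (Measurable.lintegral_prod_left' hfm) hfub.ne
  obtain ⟨b, hb⟩ := hae.exists
  have hXb : ∫⁻ ω, ENNReal.ofReal (|X ω + b| ^ ξ) ∂P < ⊤ := by
    have : ∫⁻ x, ENNReal.ofReal (|x + b| ^ ξ) ∂μ
        = ∫⁻ ω, ENNReal.ofReal (|X ω + b| ^ ξ) ∂P := by
      rw [hμ, lintegral_map (by fun_prop) hX]
    rwa [this] at hb
  calc ∫⁻ ω, ENNReal.ofReal (|X ω| ^ ξ) ∂P
      ≤ ∫⁻ ω, ENNReal.ofReal (2 ^ ξ * (|X ω + b| ^ ξ + |b| ^ ξ)) ∂P := by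
        apply lintegral_mono
        intro ω
        exact ENNReal.ofReal_le_ofReal (abs_rpow_shift_le (X ω) b ξ hξ)
    _ ≤ ∫⁻ ω, ENNReal.ofReal (2 ^ ξ) *
          (ENNReal.ofReal (|X ω + b| ^ ξ) + ENNReal.ofReal (|b| ^ ξ)) ∂P := by
        apply lintegral_mono
        intro ω
        dsimp only
        rw [ENNReal.ofReal_mul (Real.rpow_nonneg (by norm_num) ξ)]
        exact mul_le_mul_right ENNReal.ofReal_add_le _
    _ = ENNReal.ofReal (2 ^ ξ) *
          (∫⁻ ω, ENNReal.ofReal (|X ω + b| ^ ξ) ∂P + ENNReal.ofReal (|b| ^ ξ)) := by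
        rw [lintegral_const_mul _ (by fun_prop)]
        rw [lintegral_add_right _ measurable_const, lintegral_const, measure_univ, mul_one]
    _ < ⊤ := by
        apply ENNReal.mul_lt_top ENNReal.ofReal_lt_top
        exact ENNReal.add_lt_top.mpr ⟨hXb, ENNReal.ofReal_lt_top⟩

/-- **Lemma.** If `X` and `Y` are independent real random variables on a common
probability space and `ξ > 0`, then `E[|X+Y|^ξ] < ∞` implies `E[|X|^ξ] < ∞` and
`E[|Y|^ξ] < ∞`. -/
theorem indep_sum_moment {Ω : Type*} [MeasurableSpace Ω] (P : Measure Ω)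
    [IsProbabilityMeasure P] (X Y : Ω → ℝ) (hX : Measurable X) (hY : Measurable Y)
    (hindep : IndepFun X Y P) (ξ : ℝ) (hξ : 0 < ξ)
    (hsum : ∫⁻ ω, ENNReal.ofReal (|X ω + Y ω| ^ ξ) ∂P < ⊤) :
    (∫⁻ ω, ENNReal.ofReal (|X ω| ^ ξ) ∂P < ⊤) ∧
    (∫⁻ ω, ENNReal.ofReal (|Y ω| ^ ξ) ∂P < ⊤) := by
  have hsum' : ∫⁻ ω, ENNReal.ofReal (|Y ω + X ω| ^ ξ) ∂P < ⊤ := by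
    simpa [add_comm] using hsum
  exact ⟨aux_moment P X Y hX hY hindep ξ hξ hsum,
    aux_moment P Y X hY hX hindep.symm ξ hξ hsum'⟩
end

section
/- Let (Y(u))_{u∈(0,∞)} be a centred real-valued stochastic process satisfying Conditions (B). Then E[Y(u)^2] < ∞ for every u ∈ (0,∞). -/
open MeasureTheory ProbabilityTheory Filter Set

noncomputable section

/-- The law of a real stochastic process, as a measure on the product space. -/
def processLaw {Ω I : Type*} [MeasurableSpace Ω] (P : Measure Ω) (X : I → Ω → ℝ) :
    Measure (I → ℝ) :=
  Measure.map (fun ω i => X i ω) P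

/-- The σ-algebra generated by a real stochastic process. -/
def processSigma {Ω I : Type*} (X : I → Ω → ℝ) : MeasurableSpace Ω :=
  ⨆ i, MeasurableSpace.comap (X i) inferInstance

/-- Finite dimensional distributions of the process `X` are those of a centred Gaussian
process with covariance kernel `K` (expressed through one-dimensional laws of
arbitrary finite linear combinations). -/
def HasGaussianFDD {Ω : Type*} [MeasurableSpace Ω] (P : Measure Ω) {I : Type*}
    (X : I → Ω → ℝ) (K : I → I → ℝ) : Prop :=
  ∀ (n : ℕ) (idx : Fin n → I) (c : Fin n → ℝ),
    Measure.map (fun ω => ∑ i, c i * X (idx i) ω) P =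
      gaussianReal 0 (Real.toNNReal (∑ i, ∑ j, c i * c j * K (idx i) (idx j)))

/-- Conditions (B) on a centred real stochastic process `(Y(u))_{u ∈ (0,∞)}`:
stochastic continuity, finite moments of some positive order, Brownian scaling,
independence of future increments from the past, and the harness property. -/
structure ConditionsB {Ω : Type*} [MeasurableSpace Ω] (P : Measure Ω) (Y : ℝ → Ω → ℝ) :
    Prop where
  meas : ∀ u : ℝ, 0 < u → Measurable (Y u)
  /-- the process is centred -/
  centred : ∀ u : ℝ, 0 < u → Integrable (Y u) P ∧ ∫ ω, Y u ω ∂P = 0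
  /-- (i) stochastic continuity -/
  stochasticContinuity : ∀ u₀ : ℝ, 0 < u₀ →
    TendstoInMeasure P Y (nhdsWithin u₀ (Ioi 0)) (Y u₀)
  /-- (ii) finite moments of some positive order `ξ` -/
  momentBound : ∃ ξ : ℝ, 0 < ξ ∧ ∀ u : ℝ, 0 < u →
    ∫⁻ ω, ENNReal.ofReal (|Y u ω| ^ ξ) ∂P < ⊤
  /-- (iii) Brownian scaling -/
  scaling : ∀ c : ℝ, 0 < c →
    processLaw P (fun u : {u : ℝ // 0 < u} => Y (c * u.1)) =
      processLaw P (fun u : {u : ℝ // 0 < u} => fun ω => Real.sqrt c * Y u.1 ω)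
  /-- (iv) future increments independent of the past -/
  indepIncrements : ∀ u : ℝ, 0 < u →
    Indep (processSigma fun s : {s : ℝ // u ≤ s} => fun ω => Y s.1 ω - Y u ω)
          (processSigma fun s : {s : ℝ // 0 < s ∧ s ≤ u} => Y s.1) P
  /-- (v) the harness property -/
  harness : ∀ s r : ℝ, 0 < s → s < r →
    Indep (processSigma fun u : {u : ℝ // s < u ∧ u < r} => fun ω =>
            Y u.1 ω - ((u.1 - s) / (r - s) * Y r ω + (r - u.1) / (r - s) * Y s ω))
          ((processSigma fun v : {v : ℝ // 0 < v ∧ v ≤ s} => Y v.1) ⊔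
            processSigma fun v : {v : ℝ // r ≤ v} => Y v.1) P

/-!
Put `m = (s + r) / 2`, `A = Y m - Y s` and `C = Y r - Y m`. Independent increments make `A` and `C`
independent, and the harness property makes `T = A + C = Y r - Y s` independent of `A - C`, which
is twice the harness residual at `m`. Comparing characteristic functions gives
`‖φ_T (2t)‖ = ‖φ_T t‖ ^ 4`, whence `1 - ‖φ_T t‖ ^ 2 = O(t ^ 2)` along `t = t₀ / 2 ^ n`. Since
`‖φ_T‖ ^ 2` is the characteristic function of the symmetrisation of `T`, Fatou's lemma bounds
the second moment of that symmetrisation, so `T ∈ L²`.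

Brownian scaling then gives `‖Y u - Y (u / 4 ^ n)‖₂ ≤ 2 ‖Y u - Y (u / 4)‖₂` for all `n`, while
`Y (u / 4 ^ n) → 0` in probability; hence `Y u ∈ L²`.
-/

open Topology ComplexConjugate
open scoped ENNReal

lemma tendsto_one_sub_cos_mul_div_sq (x : ℝ) :
    Tendsto (fun s : ℝ => (1 - Real.cos (s * x)) / s ^ 2) (𝓝[≠] 0) (𝓝 (x ^ 2 / 2)) := by
  rw [tendsto_iff_norm_sub_tendsto_zero]
  have hbound : ∀ᶠ s in 𝓝[≠] (0 : ℝ),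
      ‖(1 - Real.cos (s * x)) / s ^ 2 - x ^ 2 / 2‖ ≤ 5 / 96 * x ^ 4 * s ^ 2 := by
    have hsmall : ∀ᶠ s in 𝓝 (0 : ℝ), |s * x| ≤ 1 := by
      have : Tendsto (fun s : ℝ => |s * x|) (𝓝 0) (𝓝 0) := by
        simpa using ((continuous_id.mul continuous_const).abs.tendsto (0 : ℝ))
      exact this.eventually (ge_mem_nhds one_pos)
    filter_upwards [nhdsWithin_le_nhds hsmall, self_mem_nhdsWithin] with s hs (hs0 : s ≠ 0)
    have hs2 : 0 < s ^ 2 := by positivity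
    rw [Real.norm_eq_abs, show (1 - Real.cos (s * x)) / s ^ 2 - x ^ 2 / 2
        = -(Real.cos (s * x) - (1 - (s * x) ^ 2 / 2)) / s ^ 2 by field_simp; ring,
      abs_div, abs_neg, abs_of_pos hs2, div_le_iff₀ hs2]
    calc _ ≤ |s * x| ^ 4 * (5 / 96) := Real.cos_bound hs
      _ = 5 / 96 * x ^ 4 * s ^ 2 * s ^ 2 := by rw [pow_abs, abs_of_nonneg (by positivity)]; ring
  have hlim : Tendsto (fun s : ℝ => 5 / 96 * x ^ 4 * s ^ 2) (𝓝 0) (𝓝 0) := by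
    simpa using ((continuous_pow 2).tendsto (0 : ℝ)).const_mul (5 / 96 * x ^ 4)
  exact squeeze_zero' (.of_forall fun _ => norm_nonneg _) hbound (hlim.mono_left nhdsWithin_le_nhds)

lemma integrable_cos_mul (μ : Measure ℝ) [IsFiniteMeasure μ] (t : ℝ) :
    Integrable (fun x => Real.cos (t * x)) μ :=
  (integrable_const (1 : ℝ)).mono (by fun_prop) (by simp [Real.abs_cos_le_one])

lemma re_charFun_eq_integral_cos (μ : Measure ℝ) [IsFiniteMeasure μ] (t : ℝ) :
    (charFun μ t).re = ∫ x, Real.cos (t * x) ∂μ := by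
  rw [charFun_apply_real, ← RCLike.re_to_complex, ← integral_re]
  · simp_rw [RCLike.re_to_complex, ← Complex.ofReal_mul, Complex.exp_ofReal_mul_I_re]
  · exact (integrable_const (1 : ℝ)).mono (by fun_prop)
      (by simp [← Complex.ofReal_mul, Complex.norm_exp_ofReal_mul_I])

lemma lintegral_sq_le_of_one_sub_re_charFun_le {μ : Measure ℝ} [IsProbabilityMeasure μ]
    {t : ℕ → ℝ} (ht : Tendsto t atTop (𝓝[≠] 0)) {M : ℝ}
    (hM : ∀ n, 1 - (charFun μ (t n)).re ≤ M * t n ^ 2) :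
    ∫⁻ x, ENNReal.ofReal (x ^ 2 / 2) ∂μ ≤ ENNReal.ofReal M := by
  set F : ℕ → ℝ → ℝ := fun n x => (1 - Real.cos (t n * x)) / t n ^ 2
  have hF_nonneg : ∀ n x, 0 ≤ F n x := fun n x =>
    div_nonneg (sub_nonneg.2 (Real.cos_le_one _)) (sq_nonneg _)
  have hF_integrable : ∀ n, Integrable (F n) μ := fun n =>
    ((integrable_const 1).sub (integrable_cos_mul μ (t n))).div_const _
  have hF_integral : ∀ n, ∫ x, F n x ∂μ = (1 - (charFun μ (t n)).re) / t n ^ 2 := by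
    intro n
    rw [integral_div, integral_sub (integrable_const 1) (integrable_cos_mul μ (t n)),
      re_charFun_eq_integral_cos]
    simp
  have hF_le : ∀ᶠ n in atTop, ∫⁻ x, ENNReal.ofReal (F n x) ∂μ ≤ ENNReal.ofReal M := by
    filter_upwards [(tendsto_nhdsWithin_iff.1 ht).2] with n (hn : t n ≠ 0)
    rw [← ofReal_integral_eq_lintegral_ofReal (hF_integrable n) (.of_forall (hF_nonneg n)),
      hF_integral]
    exact ENNReal.ofReal_le_ofReal ((div_le_iff₀ (by positivity)).2 (hM n))
  have hF_lim : ∀ x, Tendsto (fun n => ENNReal.ofReal (F n x)) atTop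
      (𝓝 (ENNReal.ofReal (x ^ 2 / 2))) := fun x =>
    (ENNReal.continuous_ofReal.tendsto _).comp ((tendsto_one_sub_cos_mul_div_sq x).comp ht)
  calc ∫⁻ x, ENNReal.ofReal (x ^ 2 / 2) ∂μ
      = ∫⁻ x, liminf (fun n => ENNReal.ofReal (F n x)) atTop ∂μ :=
        lintegral_congr fun x => (hF_lim x).liminf_eq.symm
    _ ≤ liminf (fun n => ∫⁻ x, ENNReal.ofReal (F n x) ∂μ) atTop :=
        lintegral_liminf_le fun n => by fun_prop
    _ ≤ ENNReal.ofReal M := liminf_le_of_frequently_le' hF_le.frequently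

lemma charFun_conv_map_neg (μ : Measure ℝ) [IsFiniteMeasure μ] (t : ℝ) :
    charFun (μ ∗ μ.map Neg.neg) t = (‖charFun μ t‖ ^ 2 : ℝ) := by
  have hneg : charFun (μ.map Neg.neg) t = conj (charFun μ t) := by
    simpa using charFun_map_mul (μ := μ) (-1) t
  rw [charFun_conv, hneg, Complex.mul_conj, Complex.normSq_eq_norm_sq]

lemma memLp_two_of_memLp_two_conv {μ ν : Measure ℝ} [IsFiniteMeasure μ]
    [IsProbabilityMeasure ν] (h : MemLp id 2 (μ ∗ ν)) : MemLp id 2 μ := by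
  rw [Measure.conv, memLp_map_measure_iff (by fun_prop) (by fun_prop)] at h
  obtain ⟨y, hy⟩ := h.integrable_sq.prod_left_ae.exists
  have hshift : MemLp (fun x => x + y) 2 μ :=
    (memLp_two_iff_integrable_sq (by fun_prop)).2 hy
  convert hshift.sub (memLp_const y) using 1
  ext x
  simp

lemma one_sub_le_log_two_div_of_eq_pow_four {q : ℝ → ℝ} (hq0 : ∀ s, 0 ≤ q s)
    (hq : ∀ s, q (2 * s) = q s ^ 4) {s₀ : ℝ} (hs₀ : 1 / 2 ≤ q s₀) (n : ℕ) :
    1 - q (s₀ / 2 ^ n) ≤ Real.log 2 / 4 ^ n := by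
  have hiter : ∀ n : ℕ, q s₀ = q (s₀ / 2 ^ n) ^ 4 ^ n := by
    intro n
    induction n with
    | zero => simp
    | succ n ih =>
      rw [ih, show s₀ / 2 ^ n = 2 * (s₀ / 2 ^ (n + 1)) by ring, hq, ← pow_mul, ← pow_succ' 4 n]
  -- `x ≤ exp (x - 1)` raised to the power `4 ^ n`
  have hexp : q s₀ ≤ Real.exp (4 ^ n * (q (s₀ / 2 ^ n) - 1)) := by
    rw [hiter n, show (4 : ℝ) ^ n = ((4 ^ n : ℕ) : ℝ) by norm_cast, Real.exp_nat_mul]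
    gcongr
    · exact hq0 _
    · linarith [Real.add_one_le_exp (q (s₀ / 2 ^ n) - 1)]
  have hlog : -Real.log 2 ≤ 4 ^ n * (q (s₀ / 2 ^ n) - 1) := by
    have := Real.log_le_log (by norm_num) (hs₀.trans hexp)
    rwa [Real.log_exp, one_div, Real.log_inv] at this
  rw [le_div_iff₀ (by positivity)]
  linarith

theorem memLp_two_of_norm_charFun_two_mul {ν : Measure ℝ} [IsProbabilityMeasure ν]
    (h : ∀ s, ‖charFun ν (2 * s)‖ = ‖charFun ν s‖ ^ 4) : MemLp id 2 ν := by
  set q : ℝ → ℝ := fun s => ‖charFun ν s‖ ^ 2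
  have hq : ∀ s, q (2 * s) = q s ^ 4 := fun s => by simp only [q, h]; ring
  obtain ⟨s₀, hq₀, hs₀⟩ : ∃ s₀, 1 / 2 ≤ q s₀ ∧ s₀ ≠ 0 := by
    have hcont : Continuous q := (continuous_charFun (μ := ν)).norm.pow 2
    have hnear : ∀ᶠ s in 𝓝[≠] (0 : ℝ), 1 / 2 ≤ q s :=
      nhdsWithin_le_nhds ((hcont.tendsto 0).eventually (le_mem_nhds (by norm_num [q])))
    exact (hnear.and self_mem_nhdsWithin).exists
  set t : ℕ → ℝ := fun n => s₀ / 2 ^ n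
  have ht : Tendsto t atTop (𝓝[≠] 0) := by
    refine tendsto_nhdsWithin_iff.2 ⟨?_, .of_forall fun n => by simp [t, hs₀]⟩
    simpa [t, div_eq_mul_inv] using (tendsto_pow_atTop_nhds_zero_of_lt_one
      (r := (1 / 2 : ℝ)) (by norm_num) (by norm_num)).const_mul s₀
  have := Measure.isProbabilityMeasure_map (μ := ν) measurable_neg.aemeasurable
  have hbound : ∀ n, 1 - (charFun (ν ∗ ν.map Neg.neg) (t n)).re
      ≤ Real.log 2 / s₀ ^ 2 * t n ^ 2 := by
    intro n
    have ht2 : t n ^ 2 = s₀ ^ 2 / 4 ^ n := by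
      simp only [t, div_pow]
      rw [← pow_mul, mul_comm, pow_mul]
      norm_num
    rw [charFun_conv_map_neg, Complex.ofReal_re, ht2]
    calc 1 - q (t n) ≤ Real.log 2 / 4 ^ n :=
          one_sub_le_log_two_div_of_eq_pow_four (fun s => by positivity) hq hq₀ n
      _ = Real.log 2 / s₀ ^ 2 * (s₀ ^ 2 / 4 ^ n) := by field_simp
  have hsq : Integrable (fun x => x ^ 2 / 2) (ν ∗ ν.map Neg.neg) :=
    ⟨by fun_prop, (hasFiniteIntegral_iff_ofReal (.of_forall fun x => by positivity)).2
      ((lintegral_sq_le_of_one_sub_re_charFun_le ht hbound).trans_lt ENNReal.ofReal_lt_top)⟩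
  refine memLp_two_of_memLp_two_conv (ν := ν.map Neg.neg)
    ((memLp_two_iff_integrable_sq (by fun_prop)).2 ?_)
  simpa using hsq.mul_const 2

section Independence

variable {Ω : Type*} [MeasurableSpace Ω] {P : Measure Ω}

lemma ProbabilityTheory.IndepFun.charFun_map_fun_sub_eq_mul_conj [IsFiniteMeasure P]
    {X Z : Ω → ℝ} (hX : Measurable X) (hZ : Measurable Z) (hXZ : X ⟂ᵢ[P] Z) (t : ℝ) :
    charFun (P.map fun ω => X ω - Z ω) t = charFun (P.map X) t * conj (charFun (P.map Z) t) := by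
  have hneg : charFun (P.map fun ω => -Z ω) t = conj (charFun (P.map Z) t) := by
    simpa using charFun_map_mul_comp hZ.aemeasurable (-1) t
  have hXZ' : X ⟂ᵢ[P] fun ω => -Z ω := hXZ.comp measurable_id measurable_neg
  simp_rw [sub_eq_add_neg]
  rw [hXZ'.charFun_map_fun_add_eq_mul hX.aemeasurable (by fun_prop), Pi.mul_apply, hneg]

lemma norm_charFun_two_mul_of_indepFun [IsFiniteMeasure P] {A C : Ω → ℝ} (hA : Measurable A)
    (hC : Measurable C) (hAC : A ⟂ᵢ[P] C)
    (hTV : (fun ω => A ω + C ω) ⟂ᵢ[P] (fun ω => A ω - C ω)) (s : ℝ) :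
    ‖charFun (P.map fun ω => A ω + C ω) (2 * s)‖
      = ‖charFun (P.map fun ω => A ω + C ω) s‖ ^ 4 := by
  set T := fun ω => A ω + C ω
  set V := fun ω => A ω - C ω
  have hT (t : ℝ) : charFun (P.map T) t = charFun (P.map A) t * charFun (P.map C) t := by
    rw [hAC.charFun_map_fun_add_eq_mul hA.aemeasurable hC.aemeasurable, Pi.mul_apply]
  have hV : ‖charFun (P.map V) s‖ = ‖charFun (P.map T) s‖ := by
    rw [hAC.charFun_map_fun_sub_eq_mul_conj hA hC, hT, norm_mul, norm_mul,
      RCLike.norm_conj]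
  -- `2 A = T + V` and `2 C = T - V`
  have hA2 : charFun (P.map A) (2 * s) = charFun (P.map T) s * charFun (P.map V) s := by
    rw [← charFun_map_mul_comp hA.aemeasurable, ← Pi.mul_apply (charFun (P.map T)),
      ← hTV.charFun_map_fun_add_eq_mul (by fun_prop) (by fun_prop)]
    congr with ω
    simp only [T, V]
    ring
  have hC2 : charFun (P.map C) (2 * s) = charFun (P.map T) s * conj (charFun (P.map V) s) := by
    rw [← charFun_map_mul_comp hC.aemeasurable,
      ← hTV.charFun_map_fun_sub_eq_mul_conj (by fun_prop) (by fun_prop)]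
    congr with ω
    simp only [T, V]
    ring
  rw [hT, hA2, hC2, norm_mul, norm_mul, norm_mul, RCLike.norm_conj, hV]
  ring

lemma memLp_two_add_of_indepFun [IsProbabilityMeasure P] {A C : Ω → ℝ} (hA : Measurable A)
    (hC : Measurable C) (hAC : A ⟂ᵢ[P] C) (hTV : (fun ω => A ω + C ω) ⟂ᵢ[P] (fun ω => A ω - C ω)) :
    MemLp (fun ω => A ω + C ω) 2 P := by
  have := Measure.isProbabilityMeasure_map (μ := P) (hA.add hC).aemeasurable
  have := memLp_two_of_norm_charFun_two_mul (norm_charFun_two_mul_of_indepFun hA hC hAC hTV)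
  rwa [memLp_map_measure_iff (by fun_prop) (by fun_prop)] at this

end Independence

lemma measurable_processSigma {Ω I : Type*} (X : I → Ω → ℝ) (i : I) :
    Measurable[processSigma X] (X i) :=
  measurable_iff_comap_le.2 (le_iSup (fun i => MeasurableSpace.comap (X i) inferInstance) i)

section

variable {Ω : Type*} [MeasurableSpace Ω] {P : Measure Ω}

lemma ProbabilityTheory.Indep.indepFun {m₁ m₂ : MeasurableSpace Ω} (h : Indep m₁ m₂ P)
    {f g : Ω → ℝ} (hf : Measurable[m₁] f) (hg : Measurable[m₂] g) : f ⟂ᵢ[P] g := by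
  rw [IndepFun_iff_Indep]
  exact indep_of_indep_of_le_right (indep_of_indep_of_le_left h (measurable_iff_comap_le.1 hf))
    (measurable_iff_comap_le.1 hg)

lemma tendstoInMeasure_zero_of_identDistrib {ι : Type*} {l : Filter ι} {f g : ι → Ω → ℝ}
    (hfg : ∀ i, IdentDistrib (f i) (g i) P P) (hg : TendstoInMeasure P g l 0) :
    TendstoInMeasure P f l 0 := by
  rw [tendstoInMeasure_iff_norm] at hg ⊢
  simp only [Pi.zero_apply, sub_zero] at hg ⊢
  intro ε hε
  convert hg ε hε using 2 with i
  exact (hfg i).measure_mem_eq (s := {x | ε ≤ ‖x‖}) (measurableSet_le (by fun_prop) (by fun_prop))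

end

namespace ConditionsB

variable {Ω : Type*} [MeasurableSpace Ω] {P : Measure Ω} {Y : ℝ → Ω → ℝ}

lemma indepFun_sub_sub (hY : ConditionsB P Y) {r s u v : ℝ} (hr : 0 < r) (hrs : r ≤ s)
    (hsu : s ≤ u) (huv : u ≤ v) : (fun ω => Y v ω - Y u ω) ⟂ᵢ[P] (fun ω => Y s ω - Y r ω) := by
  refine (hY.indepIncrements u (by linarith)).indepFun ?_ ?_
  · exact measurable_processSigma _ (⟨v, huv⟩ : {s : ℝ // u ≤ s})
  · exact (measurable_processSigma _ (⟨s, by linarith, hsu⟩ : {s : ℝ // 0 < s ∧ s ≤ u})).sub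
      (measurable_processSigma _ (⟨r, hr, by linarith⟩ : {s : ℝ // 0 < s ∧ s ≤ u}))

lemma memLp_two_sub [IsProbabilityMeasure P] (hY : ConditionsB P Y) {s r : ℝ} (hs : 0 < s)
    (hsr : s < r) : MemLp (fun ω => Y r ω - Y s ω) 2 P := by
  set m := (s + r) / 2 with hm_def
  have hm : s < m ∧ m < r := ⟨by rw [hm_def]; linarith, by rw [hm_def]; linarith⟩
  have hweights : (m - s) / (r - s) = 1 / 2 ∧ (r - m) / (r - s) = 1 / 2 := by
    constructor <;> rw [div_eq_iff (by linarith), hm_def] <;> ring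
  set A := fun ω => Y m ω - Y s ω
  set C := fun ω => Y r ω - Y m ω
  have hAC : A ⟂ᵢ[P] C := (hY.indepFun_sub_sub hs hm.1.le le_rfl hm.2.le).symm
  have hTV : (fun ω => A ω + C ω) ⟂ᵢ[P] (fun ω => A ω - C ω) := by
    have hT : (fun ω => A ω + C ω) = fun ω => Y r ω - Y s ω := by ext ω; simp only [A, C]; ring
    have hV : (fun ω => A ω - C ω) = fun ω =>
        2 * (Y m ω - ((m - s) / (r - s) * Y r ω + (r - m) / (r - s) * Y s ω)) := by
      ext ω; simp only [A, C, hweights]; ring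
    rw [hT, hV]
    refine ((hY.harness s r hs hsr).indepFun ?_ ?_).symm
    · exact (measurable_processSigma _ (⟨m, hm⟩ : {u : ℝ // s < u ∧ u < r})).const_mul 2
    · exact ((measurable_processSigma _ (⟨r, le_rfl⟩ : {v : ℝ // r ≤ v})).mono
        le_sup_right le_rfl).sub ((measurable_processSigma _
          (⟨s, hs, le_rfl⟩ : {v : ℝ // 0 < v ∧ v ≤ s})).mono le_sup_left le_rfl)
  have hmeas : ∀ {x}, 0 < x → Measurable (Y x) := hY.meas _
  simpa [A, C] using memLp_two_add_of_indepFun ((hmeas (by linarith)).sub (hmeas hs))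
    ((hmeas (by linarith)).sub (hmeas (by linarith))) hAC hTV

lemma identDistrib_scaling (hY : ConditionsB P Y) {c : ℝ} (hc : 0 < c) :
    IdentDistrib (fun ω (u : {u : ℝ // 0 < u}) => Y (c * u) ω)
      (fun ω (u : {u : ℝ // 0 < u}) => √c * Y u ω) P P where
  aemeasurable_fst := (measurable_pi_lambda _ fun u => hY.meas _ (mul_pos hc u.2)).aemeasurable
  aemeasurable_snd := (measurable_pi_lambda _ fun u => (hY.meas _ u.2).const_mul _).aemeasurable
  map_eq := hY.scaling c hc

lemma eLpNorm_sub_mul (hY : ConditionsB P Y) {c u v : ℝ} (hc : 0 < c) (hu : 0 < u) (hv : 0 < v)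
    (p : ℝ≥0∞) : eLpNorm (fun ω => Y (c * u) ω - Y (c * v) ω) p P
      = ENNReal.ofReal √c * eLpNorm (fun ω => Y u ω - Y v ω) p P := by
  have h := ((hY.identDistrib_scaling hc).comp
    ((measurable_pi_apply ⟨u, hu⟩).sub (measurable_pi_apply ⟨v, hv⟩))).eLpNorm_eq (p := p)
  simp only [Function.comp_def, Pi.sub_apply, ← mul_sub] at h
  rw [h, ← Real.enorm_of_nonneg (Real.sqrt_nonneg c), ← eLpNorm_const_smul]
  rfl

lemma eLpNorm_sub_div_four_pow_le (hY : ConditionsB P Y) (n : ℕ) {v : ℝ} (hv : 0 < v) :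
    eLpNorm (fun ω => Y v ω - Y (v / 4 ^ n) ω) 2 P
      ≤ 2 * eLpNorm (fun ω => Y v ω - Y (v / 4) ω) 2 P := by
  induction n generalizing v with
  | zero => simp
  | succ n ih =>
    set a := eLpNorm (fun ω => Y v ω - Y (v / 4) ω) 2 P
    have hsplit : (fun ω => Y v ω - Y (v / 4 ^ (n + 1)) ω) = (fun ω => Y v ω - Y (v / 4) ω)
        + fun ω => Y (4⁻¹ * v) ω - Y (4⁻¹ * (v / 4 ^ n)) ω := by
      ext ω
      rw [Pi.add_apply, show v / 4 ^ (n + 1) = 4⁻¹ * (v / 4 ^ n) by ring,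
        show 4⁻¹ * v = v / 4 by ring]
      ring
    have hhalf : ENNReal.ofReal √(4⁻¹ : ℝ) = 2⁻¹ := by
      rw [show (4⁻¹ : ℝ) = 2⁻¹ ^ 2 by norm_num, Real.sqrt_sq (by norm_num),
        ENNReal.ofReal_inv_of_pos two_pos, ENNReal.ofReal_ofNat]
    calc eLpNorm (fun ω => Y v ω - Y (v / 4 ^ (n + 1)) ω) 2 P
        ≤ a + eLpNorm (fun ω => Y (4⁻¹ * v) ω - Y (4⁻¹ * (v / 4 ^ n)) ω) 2 P := by
          rw [hsplit]
          exact eLpNorm_add_le ((hY.meas _ hv).sub (hY.meas _ (by positivity))).aestronglyMeasurable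
            ((hY.meas _ (by positivity)).sub (hY.meas _ (by positivity))).aestronglyMeasurable
            one_le_two
      _ = a + 2⁻¹ * eLpNorm (fun ω => Y v ω - Y (v / 4 ^ n) ω) 2 P := by
          rw [hY.eLpNorm_sub_mul (by norm_num) hv (by positivity), hhalf]
      _ ≤ a + 2⁻¹ * (2 * a) := by grw [ih hv]
      _ = 2 * a := by
          rw [← mul_assoc, ENNReal.inv_mul_cancel two_ne_zero ENNReal.ofNat_ne_top, one_mul,
            two_mul]

lemma tendstoInMeasure_div_four_pow [IsFiniteMeasure P] (hY : ConditionsB P Y) {u : ℝ}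
    (hu : 0 < u) : TendstoInMeasure P (fun n => Y (u / 4 ^ n)) atTop 0 := by
  refine tendstoInMeasure_zero_of_identDistrib (g := fun n ω => 2⁻¹ ^ n * Y u ω)
    (fun n => ?_) ?_
  · have h := (hY.identDistrib_scaling (c := 4⁻¹ ^ n) (by positivity)).comp
      (measurable_pi_apply ⟨u, hu⟩)
    have hsqrt : √(4⁻¹ ^ n : ℝ) = 2⁻¹ ^ n := by
      rw [show (4⁻¹ ^ n : ℝ) = (2⁻¹ ^ n) ^ 2 by rw [← pow_mul, mul_comm, pow_mul]; norm_num,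
        Real.sqrt_sq (by positivity)]
    simp only [Function.comp_def, hsqrt] at h
    rwa [inv_pow, inv_mul_eq_div] at h
  · refine tendstoInMeasure_of_tendsto_ae
      (fun n => ((hY.meas u hu).const_mul _).aestronglyMeasurable) (.of_forall fun ω => ?_)
    simpa using (tendsto_pow_atTop_nhds_zero_of_lt_one (r := (2⁻¹ : ℝ)) (by norm_num)
      (by norm_num)).mul_const (Y u ω)

end ConditionsB

/-- **Lemma (square integrability).** If the centred process `(Y(u))_{u∈(0,∞)}` satisfies
Conditions (B), then `E[Y(u)²] < ∞` for every `u ∈ (0,∞)`. -/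
theorem conditionsB_square_integrable {Ω : Type*} [MeasurableSpace Ω] (P : Measure Ω)
    [IsProbabilityMeasure P] (Y : ℝ → Ω → ℝ) (hY : ConditionsB P Y) :
    ∀ u : ℝ, 0 < u → ∫⁻ ω, ENNReal.ofReal ((Y u ω) ^ 2) ∂P < ⊤ := by
  intro u hu
  have hlim : TendstoInMeasure P (fun n ω => Y u ω - Y (u / 4 ^ n) ω) atTop (Y u) := by
    have h := hY.tendstoInMeasure_div_four_pow hu
    rw [tendstoInMeasure_iff_norm] at h ⊢
    simpa using h
  have hbound : eLpNorm (Y u) 2 P ≤ 2 * eLpNorm (fun ω => Y u ω - Y (u / 4) ω) 2 P :=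
    eLpNorm_le_of_tendstoInMeasure (.of_forall fun n => hY.eLpNorm_sub_div_four_pow_le n hu) hlim
      fun n => ((hY.meas u hu).sub (hY.meas _ (by positivity))).aestronglyMeasurable
  have hmem : MemLp (Y u) 2 P := ⟨(hY.meas u hu).aestronglyMeasurable, hbound.trans_lt
    (ENNReal.mul_lt_top (by simp) (hY.memLp_two_sub (by positivity) (by linarith)).eLpNorm_lt_top)⟩
  simpa using hmem.integrable_sq.lintegral_lt_top
end
end
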